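/- arXiv:1809.01794 — 4 statements merged into one kernel-verified Lean document; each statement's English description precedes it below -/
import Mathlib

section
/- Let G be a connected simple undirected graph on n ≥ 1 vertices with incidence matrix ∇ over ZMod p (p prime), and let b be uniformly distributed on (ZMod p)^{|E|}. Then a = ∇·b is uniformly distributed over the set {v ∈ (ZMod p)^n : Σ_i v_i = 0}. -/
/-!
A homomorphism of finite groups pushes the uniform distribution forward to the uniform distribution
on its image, since all nonempty fibres are cosets of the kernel. The column of `∇` at an edge
`{x, y}` with `x < y` is `e_x - e_y`, so the image lies in the zero-sum hyperplane; conversely,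
`e_i - e_j` telescopes along a path from `i` to `j`, and the vectors `e_i - e_{i₀}` span the
hyperplane.
-/

/-- Entry of the oriented incidence matrix (over `ZMod p`) at vertex `i`, column `e`. -/
def incEntry (p : ℕ) {V : Type*} [DecidableEq V] [LinearOrder V] (e : Sym2 V) (i : V) :
    ZMod p :=
  if h : i ∈ e then (if i < Sym2.Mem.other' h then 1 else -1) else 0

open Finset
open scoped Matrix

theorem PMF.map_uniformOfFintype_addMonoidHom {M N : Type*} [AddGroup M] [Fintype M]
    [AddMonoid N] [DecidableEq N] (f : M →+ N) (S : Finset N) (hS : S.Nonempty)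
    (hSf : ∀ y, y ∈ S ↔ y ∈ Set.range f) :
    PMF.map f (PMF.uniformOfFintype M) = PMF.uniformOfFinset S hS := by
  obtain ⟨y₀, hy₀⟩ := id hS
  have hfiber : ∀ y ∈ S, #{a | f a = y} = #{a | f a = y₀} := fun y hy =>
    AddMonoidHom.card_fiber_eq_of_mem_range f ((hSf y).1 hy) ((hSf y₀).1 hy₀)
  have hcard : Fintype.card M = #S * #{a | f a = y₀} := by
    rw [← card_univ, card_eq_sum_card_fiberwise fun a _ => (hSf (f a)).2 ⟨a, rfl⟩,
      sum_congr rfl hfiber, sum_const, smul_eq_mul]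
  have hpos : (#{a | f a = y₀} : ENNReal) ≠ 0 := by
    obtain ⟨a, rfl⟩ := (hSf y₀).1 hy₀
    exact Nat.cast_ne_zero.2 (card_ne_zero.2 ⟨a, by simp⟩)
  ext y
  rw [PMF.map_apply, tsum_fintype, PMF.uniformOfFinset_apply]
  simp only [PMF.uniformOfFintype_apply]
  split_ifs with hy
  · have hfiber_y : #{a | y = f a} = #{a | f a = y₀} := by
      simp_rw [eq_comm (a := y)]
      exact hfiber y hy
    rw [← sum_filter, sum_const, nsmul_eq_mul, hcard, Nat.cast_mul,
      ENNReal.mul_inv (by simp) (by simp), hfiber_y, mul_comm, mul_assoc,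
      ENNReal.inv_mul_cancel hpos (by simp), mul_one]
  · refine sum_eq_zero fun a _ => if_neg ?_
    rintro rfl
    exact hy ((hSf _).2 ⟨a, rfl⟩)

theorem incEntry_mk_of_lt (p : ℕ) {V : Type*} [DecidableEq V] [LinearOrder V] {x y : V}
    (h : x < y) : incEntry p s(x, y) = Pi.single x 1 - Pi.single y 1 := by
  ext i
  have hxy : x ≠ y := h.ne
  by_cases hix : i = x
  · subst hix
    have hm : i ∈ s(i, y) := Sym2.mem_mk_left i y
    have : Sym2.Mem.other' hm = y := Sym2.congr_right.1 (Sym2.other_spec' hm)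
    simp [incEntry, hm, this, h, hxy.symm]
  by_cases hiy : i = y
  · subst hiy
    have hm : i ∈ s(x, i) := Sym2.mem_mk_right x i
    have : Sym2.Mem.other' hm = x :=
      Sym2.congr_right.1 ((Sym2.other_spec' hm).trans Sym2.eq_swap)
    simp [incEntry, hm, this, h.not_gt, hxy]
  simp [incEntry, hix, hiy]

theorem Matrix.sum_mulVec_eq_zero {m n R : Type*} [Fintype m] [Fintype n]
    [NonUnitalNonAssocSemiring R]
    {A : Matrix m n R} (hA : ∀ j, ∑ i, A i j = 0) (b : n → R) : ∑ i, (A *ᵥ b) i = 0 := by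
  simp only [Matrix.mulVec, dotProduct]
  rw [sum_comm]
  exact sum_eq_zero fun j _ => by rw [← sum_mul, hA j, zero_mul]

section
variable {R V : Type*} [Ring R] [DecidableEq V]

theorem Submodule.mem_of_sum_eq_zero [Fintype V] (W : Submodule R (V → R)) (i₀ : V)
    (hW : ∀ i, Pi.single i 1 - Pi.single i₀ 1 ∈ W) {v : V → R} (hv : ∑ i, v i = 0) :
    v ∈ W := by
  have hv' : v = ∑ i, v i • (Pi.single i 1 - Pi.single i₀ 1 : V → R) := by
    simp_rw [smul_sub, sum_sub_distrib, ← sum_smul, hv, zero_smul, sub_zero, ← Pi.single_smul,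
      smul_eq_mul, mul_one, univ_sum_single]
  rw [hv']
  exact W.sum_mem fun i _ => W.smul_mem _ (hW i)

theorem SimpleGraph.Reachable.single_sub_single_mem {G : SimpleGraph V} (W : Submodule R (V → R))
    (hW : ∀ i j, G.Adj i j → Pi.single i 1 - Pi.single j 1 ∈ W) {i j : V}
    (h : G.Reachable i j) :
    Pi.single i 1 - Pi.single j 1 ∈ W := by
  obtain ⟨w⟩ := h
  induction w with
  | nil => simp
  | cons hadj _ ih => simpa using W.add_mem (hW _ _ hadj) ih

theorem SimpleGraph.Connected.mem_of_sum_eq_zero [Fintype V] {G : SimpleGraph V}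
    (hG : G.Connected) (W : Submodule R (V → R))
    (hW : ∀ i j, G.Adj i j → Pi.single i 1 - Pi.single j 1 ∈ W)
    {v : V → R} (hv : ∑ i, v i = 0) : v ∈ W :=
  have ⟨i₀⟩ := hG.nonempty
  W.mem_of_sum_eq_zero i₀ (fun i => (hG i i₀).single_sub_single_mem W hW) hv

end

theorem sum_incEntry_eq_zero (p : ℕ) {V : Type*} [Fintype V] [DecidableEq V] [LinearOrder V]
    {e : Sym2 V} (he : ¬e.IsDiag) : ∑ i, incEntry p e i = 0 := by
  induction e using Sym2.ind with
  | _ x y =>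
    rcases lt_or_gt_of_ne (Sym2.mk_isDiag_iff.not.1 he) with h | h
    · simp [incEntry_mk_of_lt p h, sum_sub_distrib]
    · rw [Sym2.eq_swap, incEntry_mk_of_lt p h]
      simp [sum_sub_distrib]

theorem mem_range_mulVecLin_incidence_iff {p : ℕ} {V : Type*} [Fintype V] [DecidableEq V]
    [LinearOrder V] {G : SimpleGraph V} [Fintype G.edgeSet] (hG : G.Connected)
    {nabla : Matrix V G.edgeFinset (ZMod p)}
    (hnabla : ∀ i e, nabla i e = incEntry p (e : Sym2 V) i) {v : V → ZMod p} :
    v ∈ LinearMap.range nabla.mulVecLin ↔ ∑ i, v i = 0 := by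
  constructor
  · rintro ⟨b, rfl⟩
    refine Matrix.sum_mulVec_eq_zero (fun e => ?_) b
    simp_rw [hnabla]
    exact sum_incEntry_eq_zero p (G.not_isDiag_of_mem_edgeSet (G.mem_edgeFinset.1 e.2))
  · have hcol : ∀ i j, G.Adj i j → i < j →
        Pi.single i 1 - Pi.single j 1 ∈ LinearMap.range nabla.mulVecLin := fun i j hij h =>
      ⟨Pi.single ⟨s(i, j), G.mem_edgeFinset.2 hij⟩ 1, by
        ext k
        simp [hnabla, incEntry_mk_of_lt p h]⟩
    refine hG.mem_of_sum_eq_zero _ fun i j hij => ?_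
    rcases lt_or_gt_of_ne hij.ne with h | h
    · exact hcol i j hij h
    · simpa using neg_mem (hcol j i hij.symm h)

/-- If `G` is connected and `b` is uniform on `(ZMod p)^{|E|}`, then `a = ∇ ⬝ b` is uniform
on the set of vectors whose coordinates sum to `0`. -/
theorem incidence_mulVec_uniform {n p : ℕ} [Fact p.Prime]
    (G : SimpleGraph (Fin n)) [DecidableRel G.Adj] (hG : G.Connected)
    (nabla : Matrix (Fin n) ↥G.edgeFinset (ZMod p))
    (hnabla : ∀ (i : Fin n) (e : ↥G.edgeFinset), nabla i e = incEntry p (e : Sym2 (Fin n)) i) :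
    PMF.map (fun b => nabla.mulVec b) (PMF.uniformOfFintype (↥G.edgeFinset → ZMod p))
      = PMF.uniformOfFinset (Finset.univ.filter fun v : Fin n → ZMod p => ∑ i, v i = 0)
          ⟨0, by simp⟩ :=
  PMF.map_uniformOfFintype_addMonoidHom nabla.mulVecLin.toAddMonoidHom _ _ fun v => by
    simpa using (mem_range_mulVecLin_incidence_iff hG hnabla).symm
end

section
/- Privacy of the masking protocol against a non-cutting coalition: Let G = (V,E) be a simple undirected graph, C ⊂ V with H = V\C nonempty such that the induced subgraph on H is connected. Let (b_e)_{e∈E} be i.i.d. uniform on ZMod p (p prime), and define a_i = Σ_e ∇_{i,e} b_e and s̃_i = s_i + a_i for inputs s ∈ (ZMod p)^n. Then conditioned on (b_e)_{e∈E_C} (edges incident to C), the vector (s̃_i)_{i∈H} is uniformly distributed over the affine subspace {w ∈ (ZMod p)^H : Σ_{i∈H} w_i = Σ_{i∈H} s_i + Σ_{i∈H} Σ_{e∈E_C} ∇_{i,e} b_e}. In particular this conditional distribution depends on (s_i)_{i∈H} only through Σ_{i∈H} s_i. -/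
open Finset Matrix
open scoped ENNReal

/-!
Once the coalition's edge values are fixed, the honest effective inputs are an affine function
`f₀ + M b` of the honest edge values `b`, where `M` is the oriented incidence matrix of the graph
induced on `H`. The image of the uniform distribution under an affine map of finite groups is
uniform on the image, since every fibre is a coset of the kernel. Each column of `M` sums to zero,
and for adjacent honest `u, v` the vector `e_u - e_v` is `±` a column; by connectivity these
differences span the sum-zero hyperplane, so the image is exactly the affine hyperplane of the
statement.
-/

theorem Fintype.sum_dite {ι M : Type*} [Fintype ι] [AddCommMonoid M] (P : ι → Prop)
    [DecidablePred P] (f : ∀ i, P i → M) (g : ∀ i, ¬ P i → M) :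
    ∑ i, (if h : P i then f i h else g i h) =
      ∑ i : Subtype P, f i i.2 + ∑ i : {i // ¬ P i}, g i i.2 := by
  rw [← Fintype.sum_subtype_add_sum_subtype P]
  congr 1 <;> refine sum_congr _ _ fun i ↦ ?_
  exacts [dif_pos i.2, dif_neg i.2]

namespace PMF

theorem map_uniformOfFintype_of_card_fiber_eq {α β : Type*} [Fintype α] [Nonempty α]
    [DecidableEq β] (f : α → β) (k : ℕ) (hfib : ∀ b ∈ univ.image f, #{a | f a = b} = k) :
    (uniformOfFintype α).map f = uniformOfFinset (univ.image f) (univ_nonempty.image f) := by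
  have hcard : Fintype.card α = #(univ.image f) * k := by
    rw [← card_univ, card_eq_sum_card_fiberwise fun a _ ↦ mem_image_of_mem f (mem_univ a),
      sum_congr rfl hfib, sum_const, smul_eq_mul]
  have hk : (k : ℝ≥0∞) ≠ 0 := by
    intro h
    simp [Nat.cast_eq_zero.mp h] at hcard
  ext b
  rw [map_apply, tsum_fintype, uniformOfFinset_apply]
  simp only [uniformOfFintype_apply]
  rw [← sum_filter, sum_const, filter_congr fun a _ ↦ eq_comm, nsmul_eq_mul]
  split_ifs with hb
  · rw [hfib b hb, hcard, Nat.cast_mul, ENNReal.mul_inv (by simp) (by simp), mul_left_comm,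
      ENNReal.mul_inv_cancel hk (ENNReal.natCast_ne_top k), mul_one]
  · rw [filter_false_of_mem fun a _ (hab : f a = b) ↦
        hb (hab ▸ mem_image_of_mem f (mem_univ a)), card_empty, Nat.cast_zero, zero_mul]

theorem map_add_uniformOfFintype {A B : Type*} [AddCommGroup A] [Fintype A] [AddCommGroup B]
    [DecidableEq B] (f : A →+ B) (b : B) {T : Finset B}
    (hT : ∀ y, y ∈ T ↔ ∃ x, b + f x = y) :
    ∃ hT' : T.Nonempty, (uniformOfFintype A).map (fun x ↦ b + f x) = uniformOfFinset T hT' := by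
  obtain rfl : T = univ.image fun x ↦ b + f x := by ext y; simp [hT]
  refine ⟨_, map_uniformOfFintype_of_card_fiber_eq _ #{x | f x = 0} ?_⟩
  simp only [mem_image, mem_univ, true_and, forall_exists_index, forall_apply_eq_imp_iff]
  exact fun x₀ ↦ card_equiv (Equiv.subRight x₀) fun x ↦ by simp [sub_eq_zero]

end PMF

theorem SimpleGraph.Connected.mem_of_sum_eq_zero_s11 {R W : Type*} [Ring R] [Fintype W]
    [DecidableEq W] {K : SimpleGraph W} (hK : K.Connected) {S : Submodule R (W → R)}
    (hS : ∀ u v, K.Adj u v → Pi.single u 1 - Pi.single v 1 ∈ S) {y : W → R}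
    (hy : ∑ i, y i = 0) : y ∈ S := by
  have hdiff (u v : W) : Pi.single u 1 - Pi.single v 1 ∈ S := (hK u v).elim fun w ↦ by
    induction w with
    | nil => simp
    | cons h _ ih => simpa using S.add_mem (hS _ _ h) ih
  obtain ⟨i₀⟩ := hK.nonempty
  have hy' : y = ∑ i, y i • (Pi.single i 1 - Pi.single i₀ 1) := by
    rw [sum_congr rfl fun i _ ↦ smul_sub (y i) _ _, sum_sub_distrib, ← sum_smul, hy, zero_smul,
      sub_zero]
    simp only [← Pi.single_smul', smul_eq_mul, mul_one, univ_sum_single]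
  rw [hy']
  exact S.sum_mem fun i _ ↦ S.smul_mem _ (hdiff i i₀)

theorem Matrix.exists_mulVec_eq_iff_sum_eq_zero {R W ι : Type*} [CommRing R] [Fintype W]
    [DecidableEq W] [Fintype ι] [DecidableEq ι] {K : SimpleGraph W} (hK : K.Connected)
    {M : Matrix W ι R} (hcol : ∀ j, ∑ i, M i j = 0)
    (hadj : ∀ u v, K.Adj u v → ∃ j, ∃ a : R, a • M.col j = Pi.single u 1 - Pi.single v 1)
    (y : W → R) : (∃ x, M *ᵥ x = y) ↔ ∑ i, y i = 0 := by
  refine ⟨?_, fun hy ↦ hK.mem_of_sum_eq_zero_s11 (S := LinearMap.range M.mulVecLin) ?_ hy⟩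
  · rintro ⟨x, rfl⟩
    simp only [mulVec, dotProduct]
    rw [sum_comm]
    simp [← sum_mul, hcol]
  · intro u v huv
    obtain ⟨j, a, h⟩ := hadj u v huv
    exact ⟨a • Pi.single j 1, by rw [mulVecLin_apply, mulVec_smul, mulVec_single_one, h]⟩

section incidence

variable {p : ℕ} {V : Type*} [DecidableEq V] [LinearOrder V]

theorem incEntry_of_notMem {e : Sym2 V} {i : V} (h : i ∉ e) : incEntry p e i = 0 := dif_neg h

theorem incEntry_mul_self_of_mem {e : Sym2 V} {i : V} (h : i ∈ e) :
    incEntry p e i * incEntry p e i = 1 := by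
  rw [incEntry, dif_pos h]
  split_ifs <;> simp

theorem incEntry_mk_left {u v : V} : incEntry p s(u, v) u = if u < v then 1 else -1 := by
  have h : u ∈ s(u, v) := Sym2.mem_mk_left u v
  rw [incEntry, dif_pos h, Sym2.congr_right.mp (Sym2.other_spec' h)]

theorem incEntry_mk_right {u v : V} (huv : u ≠ v) :
    incEntry p s(u, v) v = -incEntry p s(u, v) u := by
  rw [Sym2.eq_swap, incEntry_mk_left, Sym2.eq_swap, incEntry_mk_left]
  rcases huv.lt_or_gt with h | h
  · simp [h, h.not_gt]
  · simp [h, h.not_gt]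

theorem incEntry_mk_comp_subtype {P : V → Prop} {u v : V} (huv : u ≠ v) (hu : P u) (hv : P v) :
    (fun i : Subtype P ↦ incEntry p s(u, v) (i : V)) =
      incEntry p s(u, v) u • (Pi.single ⟨u, hu⟩ 1 - Pi.single ⟨v, hv⟩ 1) := by
  funext ⟨i, hi⟩
  rcases eq_or_ne i u with rfl | hiu
  · simp [huv]
  rcases eq_or_ne i v with rfl | hiv
  · simp [incEntry_mk_right huv, hiu]
  · simp [incEntry_of_notMem (p := p) (show i ∉ s(u, v) by simp [hiu, hiv]), hiu, hiv]

end incidence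

section honest

variable {V : Type*} [DecidableEq V] [LinearOrder V] (G : SimpleGraph V) [Fintype G.edgeSet]
  (C : Finset V) (p : ℕ)

def honestIncidence :
    Matrix {v | v ∉ C} {e : G.edgeFinset // ¬ ∃ v ∈ C, v ∈ (e : Sym2 V)} (ZMod p) :=
  fun i e ↦ incEntry p (e : Sym2 V) (i : V)

theorem honestIncidence_col_mk {u v : V} (hz : s(u, v) ∈ G.edgeFinset)
    (hnc : ¬ ∃ w ∈ C, w ∈ s(u, v)) (hu : u ∉ C) (hv : v ∉ C) :
    (honestIncidence G C p).col ⟨⟨s(u, v), hz⟩, hnc⟩ =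
      incEntry p s(u, v) u • (Pi.single ⟨u, hu⟩ 1 - Pi.single ⟨v, hv⟩ 1) :=
  incEntry_mk_comp_subtype (G.mem_edgeFinset.1 hz).ne hu hv

theorem sum_honestIncidence_apply_eq_zero [Fintype V]
    (e : {e : G.edgeFinset // ¬ ∃ v ∈ C, v ∈ (e : Sym2 V)}) :
    ∑ i, honestIncidence G C p i e = 0 := by
  obtain ⟨⟨z, hz⟩, hnc⟩ := e
  induction z using Sym2.ind with | _ u v => ?_
  have hu : u ∉ C := fun h ↦ hnc ⟨u, h, Sym2.mem_mk_left u v⟩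
  have hv : v ∉ C := fun h ↦ hnc ⟨v, h, Sym2.mem_mk_right u v⟩
  simp_rw [← col_apply, honestIncidence_col_mk G C p hz hnc hu hv]
  simp [← mul_sum]

theorem exists_smul_honestIncidence_col_eq {u v : {v | v ∉ C}}
    (h : (G.induce {v | v ∉ C}).Adj u v) :
    ∃ e, ∃ a : ZMod p, a • (honestIncidence G C p).col e = Pi.single u 1 - Pi.single v 1 := by
  have hz : s((u : V), v) ∈ G.edgeFinset := G.mem_edgeFinset.2 (SimpleGraph.induce_adj.1 h)
  have hnc : ¬ ∃ w ∈ C, w ∈ s((u : V), v) := by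
    rintro ⟨w, hw, hwuv⟩
    rcases Sym2.mem_iff.1 hwuv with rfl | rfl
    exacts [u.2 hw, v.2 hw]
  refine ⟨⟨⟨_, hz⟩, hnc⟩, incEntry p s((u : V), v) u, ?_⟩
  rw [honestIncidence_col_mk G C p hz hnc u.2 v.2, smul_smul,
    incEntry_mul_self_of_mem (Sym2.mem_mk_left _ _), one_smul]

end honest

theorem honest_effective_inputs_uniform_general {n p : ℕ} [Fact p.Prime]
    (G : SimpleGraph (Fin n)) [DecidableRel G.Adj] (C : Finset (Fin n))
    (hH : (G.induce {v | v ∉ C}).Connected)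
    (nabla : Matrix (Fin n) ↥G.edgeFinset (ZMod p))
    (hnabla : ∀ (i : Fin n) (e : ↥G.edgeFinset), nabla i e = incEntry p (e : Sym2 (Fin n)) i)
    (s : Fin n → ZMod p)
    (c : {e : ↥G.edgeFinset // ∃ v ∈ C, v ∈ (e : Sym2 (Fin n))} → ZMod p) :
    ∃ hne, PMF.map
        (fun bH : {e : ↥G.edgeFinset // ¬ ∃ v ∈ C, v ∈ (e : Sym2 (Fin n))} → ZMod p =>
          fun i : ↥{v : Fin n | v ∉ C} =>
            s i + ∑ e : ↥G.edgeFinset, nabla i e *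
              (if h : ∃ v ∈ C, v ∈ (e : Sym2 (Fin n)) then c ⟨e, h⟩ else bH ⟨e, h⟩))
        (PMF.uniformOfFintype
          ({e : ↥G.edgeFinset // ¬ ∃ v ∈ C, v ∈ (e : Sym2 (Fin n))} → ZMod p))
      = PMF.uniformOfFinset
          (Finset.univ.filter fun w : ↥{v : Fin n | v ∉ C} → ZMod p =>
            ∑ i, w i = (∑ i : ↥{v : Fin n | v ∉ C}, s i)
              + ∑ i : ↥{v : Fin n | v ∉ C},
                  ∑ e : {e : ↥G.edgeFinset // ∃ v ∈ C, v ∈ (e : Sym2 (Fin n))},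
                    nabla i e * c e) hne := by
  set M := honestIncidence G C p
  set f₀ : {v : Fin n | v ∉ C} → ZMod p := fun i ↦
    s i + ∑ e : {e : ↥G.edgeFinset // ∃ v ∈ C, v ∈ (e : Sym2 (Fin n))}, nabla i e * c e
  have hsplit :
      ∀ (bH : {e : ↥G.edgeFinset // ¬ ∃ v ∈ C, v ∈ (e : Sym2 (Fin n))} → ZMod p)
        (i : {v : Fin n | v ∉ C}), s i + ∑ e : ↥G.edgeFinset, nabla i e *
        (if h : ∃ v ∈ C, v ∈ (e : Sym2 (Fin n)) then c ⟨e, h⟩ else bH ⟨e, h⟩) =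
        (f₀ + M *ᵥ bH) i := by
    intro bH i
    simp only [mul_dite, Fintype.sum_dite, f₀, M, honestIncidence, mulVec, dotProduct, hnabla,
      Pi.add_apply, add_assoc]
  simp_rw [hsplit]
  refine PMF.map_add_uniformOfFintype M.mulVecLin.toAddMonoidHom f₀ fun w ↦ ?_
  have hrange := exists_mulVec_eq_iff_sum_eq_zero hH (sum_honestIncidence_apply_eq_zero G C p)
    fun u v h ↦ exists_smul_honestIncidence_col_eq G C p h
  calc w ∈ _ ↔ ∑ i, (w - f₀) i = 0 := by
        simp only [mem_filter, mem_univ, true_and, Pi.sub_apply, sum_sub_distrib, sub_eq_zero, f₀,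
          sum_add_distrib]
    _ ↔ ∃ x, M *ᵥ x = w - f₀ := (hrange _).symm
    _ ↔ ∃ x, f₀ + M.mulVecLin.toAddMonoidHom x = w := exists_congr fun x ↦ by
      rw [eq_sub_iff_add_eq, add_comm]; rfl

/-- Privacy of the masking protocol against a non-cutting coalition `C`: conditioned on any
fixed values `c` of the random values `(b_e)` on edges `E_C` incident to `C`, with the
remaining `(b_e)_{e∈E_H}` uniform and independent, the vector of honest effective inputs
`(s̃_i)_{i∈H}` is uniform on the affine subspace of vectors `w` with
`∑_{i∈H} w i = ∑_{i∈H} s i + ∑_{i∈H} ∑_{e∈E_C} ∇_{i,e} c_e`. -/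
theorem honest_effective_inputs_uniform {n p : ℕ} [Fact p.Prime]
    (G : SimpleGraph (Fin n)) [DecidableRel G.Adj] (C : Finset (Fin n))
    [DecidableRel (G.induce {v | v ∉ C}).Adj]
    (hH : (G.induce {v | v ∉ C}).Connected)
    (nabla : Matrix (Fin n) ↥G.edgeFinset (ZMod p))
    (hnabla : ∀ (i : Fin n) (e : ↥G.edgeFinset), nabla i e = incEntry p (e : Sym2 (Fin n)) i)
    (s : Fin n → ZMod p)
    (c : {e : ↥G.edgeFinset // ∃ v ∈ C, v ∈ (e : Sym2 (Fin n))} → ZMod p) :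
    ∃ hne, PMF.map
        (fun bH : {e : ↥G.edgeFinset // ¬ ∃ v ∈ C, v ∈ (e : Sym2 (Fin n))} → ZMod p =>
          fun i : ↥{v : Fin n | v ∉ C} =>
            s i + ∑ e : ↥G.edgeFinset, nabla i e *
              (if h : ∃ v ∈ C, v ∈ (e : Sym2 (Fin n)) then c ⟨e, h⟩ else bH ⟨e, h⟩))
        (PMF.uniformOfFintype
          ({e : ↥G.edgeFinset // ¬ ∃ v ∈ C, v ∈ (e : Sym2 (Fin n))} → ZMod p))
      = PMF.uniformOfFinset
          (Finset.univ.filter fun w : ↥{v : Fin n | v ∉ C} → ZMod p =>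
            ∑ i, w i = (∑ i : ↥{v : Fin n | v ∉ C}, s i)
              + ∑ i : ↥{v : Fin n | v ∉ C},
                  ∑ e : {e : ↥G.edgeFinset // ∃ v ∈ C, v ∈ (e : Sym2 (Fin n))},
                    nabla i e * c e) hne :=
  honest_effective_inputs_uniform_general G C hH nabla hnabla s c
end

section
/- Perfect C-privacy of the effective inputs: under the masking protocol on an undirected graph G where C is not a vertex cut, for any two input vectors s, s' ∈ (ZMod p)^n with s_i = s'_i for all i ∈ C and Σ_{i∈H} s_i = Σ_{i∈H} s'_i, the joint distribution of (s_C, (s̃_i)_{i∈V}, (b_e)_{e∈E_C}) under inputs s is identical to the joint distribution under inputs s'. -/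
lemma PMF_map_equiv_uniform {α : Type*} [Fintype α] [Nonempty α] (e : α ≃ α) :
    PMF.map e (PMF.uniformOfFintype α) = PMF.uniformOfFintype α := by
  ext b
  rw [PMF.map_apply]
  rw [tsum_eq_single (e.symm b)]
  · simp [PMF.uniformOfFintype_apply]
  · intro a ha
    rw [if_neg]
    intro h
    exact ha (by simp [h])

section Flow

variable {n p : ℕ} (G : SimpleGraph (Fin n)) [DecidableRel G.Adj] (C : Finset (Fin n))
  (nabla : Matrix (Fin n) ↥G.edgeFinset (ZMod p))

/-- `d` is achievable as the incidence image of a flow avoiding `C`-incident edges. -/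
def Good (d : Fin n → ZMod p) : Prop :=
  ∃ δ : ↥G.edgeFinset → ZMod p,
    (∀ e : ↥G.edgeFinset, (∃ v ∈ C, v ∈ (e : Sym2 (Fin n))) → δ e = 0) ∧
    ∀ i, ∑ e : ↥G.edgeFinset, nabla i e * δ e = d i

lemma good_zero : Good G C nabla 0 := ⟨0, by simp, by simp⟩

lemma good_add {d1 d2 : Fin n → ZMod p} (h1 : Good G C nabla d1) (h2 : Good G C nabla d2) :
    Good G C nabla (d1 + d2) := by
  obtain ⟨δ1, hz1, hs1⟩ := h1
  obtain ⟨δ2, hz2, hs2⟩ := h2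
  refine ⟨δ1 + δ2, fun e he => by simp [hz1 e he, hz2 e he], fun i => ?_⟩
  simp only [Pi.add_apply, mul_add, Finset.sum_add_distrib, hs1 i, hs2 i]

lemma good_smul (c : ZMod p) {d : Fin n → ZMod p} (h : Good G C nabla d) :
    Good G C nabla (c • d) := by
  obtain ⟨δ, hz, hs⟩ := h
  refine ⟨c • δ, fun e he => by simp [hz e he], fun i => ?_⟩
  simp only [Pi.smul_apply, smul_eq_mul]
  rw [← hs i, Finset.mul_sum]
  exact Finset.sum_congr rfl fun e _ => by ring

lemma good_congr {d1 d2 : Fin n → ZMod p} (h : ∀ i, d1 i = d2 i) (hg : Good G C nabla d1) :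
    Good G C nabla d2 := by
  obtain ⟨δ, hz, hs⟩ := hg
  exact ⟨δ, hz, fun i => (hs i).trans (h i)⟩

lemma good_edge
    (hnabla : ∀ (i : Fin n) (e : ↥G.edgeFinset), nabla i e = incEntry p (e : Sym2 (Fin n)) i)
    {u v : Fin n} (hu : u ∉ C) (hv : v ∉ C) (hadj : G.Adj u v) :
    Good G C nabla (fun i => (if i = v then 1 else 0) - (if i = u then 1 else 0)) := by
  have hne : u ≠ v := hadj.ne
  have he0 : s(u, v) ∈ G.edgeFinset := by
    rw [SimpleGraph.mem_edgeFinset, SimpleGraph.mem_edgeSet]; exact hadj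
  have he0' : s(u, v) = (⟨s(u, v), he0⟩ : ↥G.edgeFinset) := rfl
  set e0 : ↥G.edgeFinset := ⟨s(u, v), he0⟩ with he0def
  refine ⟨fun e => if e = e0 then -(if u < v then (1 : ZMod p) else -1) else 0, ?_, ?_⟩
  · intro e he
    beta_reduce
    rw [if_neg]
    intro h
    obtain ⟨w, hwC, hwe⟩ := he
    rw [h] at hwe
    simp only [he0def, Sym2.mem_iff] at hwe
    rcases hwe with rfl | rfl
    · exact hu hwC
    · exact hv hwC
  · intro i
    beta_reduce
    rw [Fintype.sum_eq_single e0 (fun e he => by beta_reduce; rw [if_neg he, mul_zero])]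
    rw [if_pos rfl, hnabla]
    by_cases hiu : i = u
    · subst hiu
      have hmem : i ∈ s(i, v) := Sym2.mem_mk_left i v
      have hoth : Sym2.Mem.other' hmem = v := by
        have h2 := Sym2.other_spec' hmem
        rwa [Sym2.congr_right] at h2
      show incEntry p s(i, v) i * _ = _
      rw [incEntry, dif_pos hmem, hoth, if_neg hne, if_pos rfl]
      rcases lt_trichotomy i v with h | h | h
      · rw [if_pos h]; ring
      · exact absurd h hne
      · rw [if_neg (asymm h)]; ring
    · by_cases hiv : i = v
      · subst hiv
        have hmem : i ∈ s(u, i) := Sym2.mem_mk_right u i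
        have hoth : Sym2.Mem.other' hmem = u := by
          have h3 : s(i, Sym2.Mem.other' hmem) = s(i, u) :=
            (Sym2.other_spec' hmem).trans Sym2.eq_swap
          rwa [Sym2.congr_right] at h3
        show incEntry p s(u, i) i * _ = _
        rw [incEntry, dif_pos hmem, hoth, if_pos rfl, if_neg hiu]
        rcases lt_trichotomy i u with h | h | h
        · rw [if_pos h, if_neg (asymm h)]; ring
        · exact absurd h.symm hne
        · rw [if_neg (asymm h)]; rw [if_pos h]; ring
      · have hnm : i ∉ s(u, v) := by
          rw [Sym2.mem_iff]; push_neg; exact ⟨hiu, hiv⟩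
        show incEntry p s(u, v) i * _ = _
        rw [incEntry, dif_neg hnm, if_neg hiv, if_neg hiu]
        ring

end Flow

lemma good_diff {n p : ℕ} (G : SimpleGraph (Fin n)) [DecidableRel G.Adj] (C : Finset (Fin n))
    (nabla : Matrix (Fin n) ↥G.edgeFinset (ZMod p))
    (hnabla : ∀ (i : Fin n) (e : ↥G.edgeFinset), nabla i e = incEntry p (e : Sym2 (Fin n)) i)
    (hH : (G.induce {v | v ∉ C}).Connected)
    (u v : ↥{v : Fin n | v ∉ C}) :
    Good G C nabla (fun i => (if i = ↑v then 1 else 0) - (if i = ↑u then 1 else 0)) := by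
  obtain ⟨w⟩ := hH.preconnected u v
  induction w with
  | nil =>
    exact good_congr G C nabla (fun i => by simp) (good_zero G C nabla)
  | @cons a b c hab w ih =>
    have hadj : G.Adj ↑a ↑b := hab
    have g1 := good_edge G C nabla hnabla a.2 b.2 hadj
    have g2 := ih
    refine good_congr G C nabla (fun i => ?_) (good_add G C nabla g1 g2)
    simp only [Pi.add_apply]
    ring

/-- Perfect `C`-privacy: if `C` is not a vertex cut, then for any two input vectors agreeing
on `C` and with equal sums over `H = V \ C`, the adversary's view
`(s_C, (s̃_i)_i, (b_e)_{e∈E_C})` has identical distribution (over i.i.d. uniform `b`). -/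
theorem view_distribution_eq {n p : ℕ} [Fact p.Prime]
    (G : SimpleGraph (Fin n)) [DecidableRel G.Adj] (C : Finset (Fin n))
    [DecidableRel (G.induce {v | v ∉ C}).Adj]
    (hH : (G.induce {v | v ∉ C}).Connected)
    (nabla : Matrix (Fin n) ↥G.edgeFinset (ZMod p))
    (hnabla : ∀ (i : Fin n) (e : ↥G.edgeFinset), nabla i e = incEntry p (e : Sym2 (Fin n)) i)
    (s s' : Fin n → ZMod p)
    (hsC : ∀ i ∈ C, s i = s' i)
    (hsum : ∑ i : ↥{v : Fin n | v ∉ C}, s i = ∑ i : ↥{v : Fin n | v ∉ C}, s' i) :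
    PMF.map (fun b : ↥G.edgeFinset → ZMod p =>
        ((fun i : ↥C => s i),
         (fun i : Fin n => s i + ∑ e : ↥G.edgeFinset, nabla i e * b e),
         (fun e : {e : ↥G.edgeFinset // ∃ v ∈ C, v ∈ (e : Sym2 (Fin n))} => b e)))
      (PMF.uniformOfFintype (↥G.edgeFinset → ZMod p))
    = PMF.map (fun b : ↥G.edgeFinset → ZMod p =>
        ((fun i : ↥C => s' i),
         (fun i : Fin n => s' i + ∑ e : ↥G.edgeFinset, nabla i e * b e),
         (fun e : {e : ↥G.edgeFinset // ∃ v ∈ C, v ∈ (e : Sym2 (Fin n))} => b e)))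
      (PMF.uniformOfFintype (↥G.edgeFinset → ZMod p)) := by
  classical
  have hgood : Good G C nabla (fun i => s i - s' i) := by
    obtain ⟨i0⟩ := hH.nonempty
    have hsum0 : ∑ v : ↥{v : Fin n | v ∉ C}, (s ↑v - s' ↑v) = 0 := by
      rw [Finset.sum_sub_distrib, hsum, sub_self]
    have hbig : Good G C nabla (∑ v : ↥{v : Fin n | v ∉ C},
        (s ↑v - s' ↑v) • (fun i => (if i = ↑v then (1 : ZMod p) else 0)
          - (if i = ↑i0 then 1 else 0))) := by
      refine Finset.sum_induction _ _ (fun a b ha hb => good_add G C nabla ha hb)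
        (good_zero G C nabla) (fun v _ => ?_)
      exact good_smul G C nabla _ (good_diff G C nabla hnabla hH i0 v)
    refine good_congr G C nabla (fun i => ?_) hbig
    rw [Finset.sum_apply]
    simp only [Pi.smul_apply, Pi.sub_apply, smul_eq_mul]
    have hterm : ∀ v : ↥{v : Fin n | v ∉ C},
        (s ↑v - s' ↑v) * ((if i = ↑v then (1 : ZMod p) else 0) - (if i = ↑i0 then 1 else 0))
        = (s ↑v - s' ↑v) * (if i = ↑v then 1 else 0)
          - (s ↑v - s' ↑v) * (if i = ↑i0 then 1 else 0) := fun v => by ring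
    rw [Finset.sum_congr rfl (fun v _ => hterm v), Finset.sum_sub_distrib,
      ← Finset.sum_mul, hsum0, zero_mul, sub_zero]
    by_cases hi : i ∈ C
    · rw [Finset.sum_eq_zero fun v _ => by
        rw [if_neg (fun h : i = ↑v => v.2 (h ▸ hi)), mul_zero]]
      rw [hsC i hi, sub_self]
    · rw [Fintype.sum_eq_single (⟨i, hi⟩ : ↥{v : Fin n | v ∉ C})
        (fun v hv => by
          rw [if_neg (fun h => hv (Subtype.ext h.symm)), mul_zero])]
      rw [if_pos rfl, mul_one]
  obtain ⟨δ, hδ0, hδ⟩ := hgood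
  have key : (fun b : ↥G.edgeFinset → ZMod p =>
        ((fun i : ↥C => s i),
         (fun i : Fin n => s i + ∑ e : ↥G.edgeFinset, nabla i e * b e),
         (fun e : {e : ↥G.edgeFinset // ∃ v ∈ C, v ∈ (e : Sym2 (Fin n))} => b e)))
      = (fun b : ↥G.edgeFinset → ZMod p =>
        ((fun i : ↥C => s' i),
         (fun i : Fin n => s' i + ∑ e : ↥G.edgeFinset, nabla i e * b e),
         (fun e : {e : ↥G.edgeFinset // ∃ v ∈ C, v ∈ (e : Sym2 (Fin n))} => b e)))
        ∘ (Equiv.addRight δ) := by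
    funext b
    simp only [Function.comp_apply, Equiv.coe_addRight, Prod.mk.injEq]
    refine ⟨funext fun i => hsC i i.2, funext fun i => ?_, funext fun e => ?_⟩
    · have h := hδ i
      simp only [Pi.add_apply, mul_add, Finset.sum_add_distrib, h]
      ring
    · rw [Pi.add_apply, hδ0 ↑e e.2, add_zero]
  rw [key, ← PMF.map_comp, PMF_map_equiv_uniform]
end

section
/- Correctness of the two-phase average consensus: with inputs s_i ∈ {0,...,q-1}, modulus p > n(q-1), masks a_i from exchanged values r_{ij} as above, and effective inputs s̃_i = (s_i + a_i) mod p, the quantity ((Σ_i s̃_i) mod p)/n (computed over the rationals) equals the true average (Σ_i s_i)/n. -/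
/-!
Every exchanged value `r i j` enters the mask of `j` with a plus sign and the mask of `i` with a
minus sign, so the masks sum to zero and vanish modulo `p` in the total. Hence
`∑ s̃ i ≡ ∑ s i (mod p)`, and since `0 ≤ ∑ s i ≤ n (q - 1) < p`, reducing modulo `p` recovers
`∑ s i` exactly.
-/

open Finset

theorem SimpleGraph.sum_sum_neighborFinset_sub_eq_zero {V M : Type*} [Fintype V]
    [AddCommGroup M] (G : SimpleGraph V) [DecidableRel G.Adj] (f : V → V → M) :
    ∑ i, ∑ j ∈ G.neighborFinset i, (f j i - f i j) = 0 := by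
  have hswap : ∑ i, ∑ j ∈ G.neighborFinset i, f j i = ∑ j, ∑ i ∈ G.neighborFinset j, f j i :=
    sum_comm' fun i j => by simp [G.adj_comm]
  simp only [sum_sub_distrib, hswap, sub_self]

theorem Int.sum_emod_add_emod_eq_of_sum_eq_zero {ι : Type*} {s : Finset ι} {x m : ι → ℤ}
    (p : ℤ) (hm : ∑ i ∈ s, m i = 0) :
    (∑ i ∈ s, (x i + m i % p) % p) % p = (∑ i ∈ s, x i) % p := by
  have hmask : (∑ i ∈ s, m i % p) % p = 0 := by
    rw [← sum_int_mod, hm, zero_emod]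
  rw [← sum_int_mod, sum_add_distrib, add_emod, hmask, add_zero, emod_emod]

theorem two_phase_average_correct_general {n : ℕ} (q p : ℤ)
    (hp : n * (q - 1) < p)
    (G : SimpleGraph (Fin n)) [DecidableRel G.Adj]
    (r : Fin n → Fin n → ℤ)
    (s a stilde : Fin n → ℤ)
    (hsrange : ∀ i, 0 ≤ s i ∧ s i ≤ q - 1)
    (ha : ∀ i, a i = (∑ j ∈ G.neighborFinset i, (r j i - r i j)) % p)
    (hstilde : ∀ i, stilde i = (s i + a i) % p) :
    (((∑ i, stilde i) % p : ℤ) : ℚ) / n = ((∑ i, s i : ℤ) : ℚ) / n := by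
  have hnonneg : 0 ≤ ∑ i, s i := sum_nonneg fun i _ => (hsrange i).1
  have hlt : ∑ i, s i < p :=
    calc ∑ i, s i ≤ ∑ _i : Fin n, (q - 1) := sum_le_sum fun i _ => (hsrange i).2
      _ = n * (q - 1) := by simp [mul_sub]
      _ < p := hp
  have hrecover : (∑ i, stilde i) % p = ∑ i, s i := by
    simp only [hstilde, ha]
    rw [Int.sum_emod_add_emod_eq_of_sum_eq_zero p (G.sum_sum_neighborFinset_sub_eq_zero r),
      Int.emod_eq_of_lt hnonneg hlt]
  rw [hrecover]

/-- Correctness of the two-phase private average consensus: with integer inputs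
`s i ∈ {0,…,q-1}`, modulus `p > n(q-1)`, masks `a i = (∑_{j∈N_i} (r j i - r i j)) mod p` and
effective inputs `s̃ i = (s i + a i) mod p`, the quantity `((∑ i, s̃ i) mod p) / n` computed
over the rationals equals the true average `(∑ i, s i) / n`. -/
theorem two_phase_average_correct {n : ℕ} (hn : 1 ≤ n) (q p : ℤ) (hq : 1 < q)
    (hp : n * (q - 1) < p)
    (G : SimpleGraph (Fin n)) [DecidableRel G.Adj]
    (r : Fin n → Fin n → ℤ) (hr : ∀ i j, 0 ≤ r i j ∧ r i j < p)
    (s a stilde : Fin n → ℤ)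
    (hsrange : ∀ i, 0 ≤ s i ∧ s i ≤ q - 1)
    (ha : ∀ i, a i = (∑ j ∈ G.neighborFinset i, (r j i - r i j)) % p)
    (hstilde : ∀ i, stilde i = (s i + a i) % p) :
    (((∑ i, stilde i) % p : ℤ) : ℚ) / n = ((∑ i, s i : ℤ) : ℚ) / n :=
  two_phase_average_correct_general q p hp G r s a stilde hsrange ha hstilde
end
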